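/- If the distortion function D is convex, then 𝓛_Q ⊆ {X | E[X^+] < ∞}, and E[X] ≤ ϱ_Q[X] holds for every X ∈ 𝓛_Q (where E[X] := E[X^+] − E[X^−] ∈ [−∞,∞)). -/

import Mathlib

/-!
Convexity together with `D 0 = 0` and `D 1 ≤ 1` gives `D c ≤ c`, hence `Q (0, c] ≤ c`: the
measure `Q` dominates the uniform distribution on `(0, 1)` stochastically. The quantile
function `q` of `X` satisfies `q u ≤ x ↔ u ≤ F_X x`, so its tail sets are intervals:
`{q > t} = (F_X t, 1)` and `{q ≤ -t} ⊆ (0, F_X (-t)]`. Hence for `t > 0`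
`P[X > t] = 1 - F_X t ≤ Q{q > t}` and `Q{q ≤ -t} ≤ F_X (-t) = P[X ≤ -t]`, and integrating
over `t > 0` (layer cake) gives `E[X⁺] ≤ ∫ q⁺ dQ` and `∫ q⁻ dQ ≤ E[X⁻]`.
-/

open MeasureTheory

/-- The distribution function `F_X(x) = P[X ≤ x]` of a random variable `X`. -/
noncomputable def distFun {Ω : Type*} [MeasurableSpace Ω] (P : Measure Ω) (X : Ω → ℝ) (x : ℝ) : ℝ :=
  (P {ω | X ω ≤ x}).toReal

/-- The (lower) quantile function `F^←_X(u) = inf {x | F_X(x) ≥ u}`. -/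
noncomputable def quantile {Ω : Type*} [MeasurableSpace Ω] (P : Measure Ω) (X : Ω → ℝ) (u : ℝ) : ℝ :=
  sInf {x : ℝ | u ≤ distFun P X x}

/-- A distortion function: an increasing, right-continuous `D : [0,1] → [0,1]`
with `D 0 = 0` and `sup_{u ∈ (0,1)} D u = 1`. -/
structure IsDistortion (D : ℝ → ℝ) : Prop where
  mapsTo : ∀ u ∈ Set.Icc (0:ℝ) 1, D u ∈ Set.Icc (0:ℝ) 1
  mono : ∀ ⦃a b : ℝ⦄, 0 ≤ a → a ≤ b → b ≤ 1 → D a ≤ D b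
  rightCont : ∀ u ∈ Set.Ico (0:ℝ) 1, ContinuousWithinAt D (Set.Icc u 1) u
  zero : D 0 = 0
  sup_one : sSup (D '' Set.Ioo 0 1) = 1

/-- `Q` is the probability measure on the Borel sets of `(0,1)` corresponding to
the distortion function `D`, i.e. `Q (a,b] = D b - D a` for `0 < a ≤ b < 1`. -/
def IsCorresponding (D : ℝ → ℝ) (Q : Measure ℝ) : Prop :=
  IsProbabilityMeasure Q ∧ Q (Set.Ioo (0:ℝ) 1) = 1 ∧
    ∀ a b : ℝ, 0 < a → a ≤ b → b < 1 → Q (Set.Ioc a b) = ENNReal.ofReal (D b - D a)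

/-- `X ∈ 𝓛_Q`, i.e. `∫_{(0,1)} (F^←_X(u))⁺ dQ(u) < ∞`. -/
def memLQ {Ω : Type*} [MeasurableSpace Ω] (P : Measure Ω) (Q : Measure ℝ) (X : Ω → ℝ) : Prop :=
  ∫⁻ u in Set.Ioo (0:ℝ) 1, ENNReal.ofReal (max (quantile P X u) 0) ∂Q < ⊤

/-- The quantile risk measure
`ϱ_Q[X] = ∫_{(0,1)} (F^←_X(u))⁺ dQ(u) - ∫_{(0,1)} (F^←_X(u))⁻ dQ(u)`, with values in `EReal`. -/
noncomputable def rho {Ω : Type*} [MeasurableSpace Ω] (P : Measure Ω) (Q : Measure ℝ)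
    (X : Ω → ℝ) : EReal :=
  ((∫⁻ u in Set.Ioo (0:ℝ) 1, ENNReal.ofReal (max (quantile P X u) 0) ∂Q) : EReal)
    - ((∫⁻ u in Set.Ioo (0:ℝ) 1, ENNReal.ofReal (max (-(quantile P X u)) 0) ∂Q) : EReal)

open ProbabilityTheory Set

theorem StieltjesFunction.le_apply_csInf (F : StieltjesFunction ℝ) {u : ℝ}
    (hne : {x | u ≤ F x}.Nonempty) :
    u ≤ F (sInf {x | u ≤ F x}) := by
  refine ge_of_tendsto ((F.right_continuous _).mono Ioi_subset_Ici_self) ?_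
  filter_upwards [self_mem_nhdsWithin] with y (hy : sInf _ < y)
  obtain ⟨z, hz, hzy⟩ := exists_lt_of_csInf_lt hne hy
  exact hz.trans (F.mono hzy.le)

theorem ProbabilityTheory.csInf_le_iff_le_cdf (μ : Measure ℝ) [IsProbabilityMeasure μ]
    {u : ℝ} (hu : u ∈ Ioo 0 1) (x : ℝ) :
    sInf {y | u ≤ cdf μ y} ≤ x ↔ u ≤ cdf μ x := by
  have hne : {y | u ≤ cdf μ y}.Nonempty :=
    ((tendsto_cdf_atTop μ).eventually (lt_mem_nhds hu.2)).exists.imp fun _ => le_of_lt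
  have hbdd : BddBelow {y | u ≤ cdf μ y} := by
    obtain ⟨z, hz⟩ := ((tendsto_cdf_atBot μ).eventually (gt_mem_nhds hu.1)).exists
    exact ⟨z, fun y hy => ((monotone_cdf μ).reflect_lt (hz.trans_le hy)).le⟩
  exact ⟨fun h => ((cdf μ).le_apply_csInf hne).trans ((cdf μ).mono h), fun h => csInf_le hbdd h⟩

section Quantile

variable {Ω : Type*} [MeasurableSpace Ω] {P : Measure Ω} [IsProbabilityMeasure P] {X : Ω → ℝ}

theorem ofReal_distFun (x : ℝ) : ENNReal.ofReal (distFun P X x) = P {ω | X ω ≤ x} :=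
  ENNReal.ofReal_toReal (measure_ne_top _ _)

theorem distFun_eq_cdf_map (hX : Measurable X) : distFun P X = cdf (P.map X) := by
  have := Measure.isProbabilityMeasure_map (μ := P) hX.aemeasurable
  ext x
  rw [cdf_eq_real, measureReal_def, Measure.map_apply hX measurableSet_Iic]
  rfl

theorem distFun_mem_Icc (hX : Measurable X) (x : ℝ) : distFun P X x ∈ Icc 0 1 := by
  rw [distFun_eq_cdf_map hX]
  exact ⟨cdf_nonneg _ x, cdf_le_one _ x⟩

theorem quantile_le_iff (hX : Measurable X) {u : ℝ} (hu : u ∈ Ioo 0 1) (x : ℝ) :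
    quantile P X u ≤ x ↔ u ≤ distFun P X x := by
  have := Measure.isProbabilityMeasure_map (μ := P) hX.aemeasurable
  rw [quantile, distFun_eq_cdf_map hX]
  exact csInf_le_iff_le_cdf _ hu x

theorem monotoneOn_quantile (hX : Measurable X) : MonotoneOn (quantile P X) (Ioo 0 1) :=
  fun _ hu _ hv huv => (quantile_le_iff hX hu _).2 <| huv.trans <| (quantile_le_iff hX hv _).1 le_rfl

end Quantile

section Distortion

variable {D : ℝ → ℝ} {Q : Measure ℝ}

theorem IsDistortion.le_self_of_convexOn (hD : IsDistortion D)
    (hconv : ConvexOn ℝ (Icc 0 1) D) {c : ℝ} (hc : c ∈ Icc 0 1) : D c ≤ c := by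
  have h := hconv.2 (right_mem_Icc.2 zero_le_one) (left_mem_Icc.2 zero_le_one) hc.1
    (sub_nonneg.2 hc.2) (add_sub_cancel c 1)
  simp only [smul_eq_mul, mul_one, mul_zero, add_zero, hD.zero] at h
  exact h.trans (mul_le_of_le_one_right hc.1 (hD.mapsTo 1 (right_mem_Icc.2 zero_le_one)).2)

theorem IsCorresponding.measure_Ioc_zero_le (hD : IsDistortion D) (hQ : IsCorresponding D Q)
    {c : ℝ} (hc : c < 1) : Q (Ioc 0 c) ≤ ENNReal.ofReal (D c) := by
  have hU : Ioc 0 c = ⋃ a : Ioi (0:ℝ), Ioc (a:ℝ) c := by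
    ext u
    simp only [mem_iUnion, mem_Ioc, Subtype.exists, mem_Ioi, exists_prop]
    constructor
    · rintro ⟨hu, huc⟩
      exact ⟨u / 2, half_pos hu, half_lt_self hu, huc⟩
    · rintro ⟨a, ha, hau, huc⟩
      exact ⟨ha.trans hau, huc⟩
  have hmono : Antitone fun a : Ioi (0:ℝ) => Ioc (a:ℝ) c := fun _ _ hab => Ioc_subset_Ioc_left hab
  rw [hU, hmono.measure_iUnion]
  refine iSup_le fun ⟨a, ha⟩ => ?_
  rcases le_or_gt a c with hac | hca
  · rw [hQ.2.2 a c ha hac hc]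
    exact ENNReal.ofReal_le_ofReal
      (sub_le_self _ (hD.mapsTo a ⟨ha.le, (hac.trans hc.le)⟩).1)
  · simp [Ioc_eq_empty_of_le hca.le]

theorem IsCorresponding.measure_Ioc_zero_le_of_convexOn (hD : IsDistortion D)
    (hQ : IsCorresponding D Q) (hconv : ConvexOn ℝ (Icc 0 1) D) {c : ℝ} (hc : c ∈ Icc 0 1) :
    Q (Ioc 0 c) ≤ ENNReal.ofReal c := by
  have := hQ.1
  rcases hc.2.lt_or_eq with hc1 | rfl
  · exact (hQ.measure_Ioc_zero_le hD hc1).trans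
      (ENNReal.ofReal_le_ofReal (hD.le_self_of_convexOn hconv hc))
  · simpa using prob_le_one

theorem IsCorresponding.one_sub_le_measure_Ioo_of_convexOn (hD : IsDistortion D)
    (hQ : IsCorresponding D Q) (hconv : ConvexOn ℝ (Icc 0 1) D) {c : ℝ} (hc : c ∈ Icc 0 1) :
    1 - ENNReal.ofReal c ≤ Q (Ioo c 1) := by
  rw [tsub_le_iff_left, ← hQ.2.1]
  calc Q (Ioo 0 1) ≤ Q (Ioc 0 c ∪ Ioo c 1) := measure_mono fun u ⟨hu0, hu1⟩ =>
        (le_or_gt u c).imp (fun h => ⟨hu0, h⟩) (fun h => ⟨h, hu1⟩)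
    _ ≤ Q (Ioc 0 c) + Q (Ioo c 1) := measure_union_le _ _
    _ ≤ ENNReal.ofReal c + Q (Ioo c 1) := by
        gcongr; exact hQ.measure_Ioc_zero_le_of_convexOn hD hconv hc

end Distortion

section TailComparison

variable {Ω : Type*} [MeasurableSpace Ω] {P : Measure Ω} [IsProbabilityMeasure P] {X : Ω → ℝ}
  {D : ℝ → ℝ} {Q : Measure ℝ}

theorem measure_lt_max_le_restrict_quantile (hD : IsDistortion D) (hQ : IsCorresponding D Q)
    (hconv : ConvexOn ℝ (Icc 0 1) D) (hX : Measurable X) {t : ℝ} (ht : 0 < t) :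
    P {ω | t < max (X ω) 0} ≤ Q.restrict (Ioo 0 1) {u | t < max (quantile P X u) 0} := by
  have hF := distFun_mem_Icc (P := P) hX t
  have hset : {ω | t < max (X ω) 0} = {ω | X ω ≤ t}ᶜ := by
    ext ω
    simp [ht.not_gt]
  calc P {ω | t < max (X ω) 0} = 1 - ENNReal.ofReal (distFun P X t) := by
        rw [hset, prob_compl_eq_one_sub (measurableSet_le hX measurable_const), ofReal_distFun]
    _ ≤ Q (Ioo (distFun P X t) 1) := hQ.one_sub_le_measure_Ioo_of_convexOn hD hconv hF
    _ ≤ Q ({u | t < max (quantile P X u) 0} ∩ Ioo 0 1) := by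
        refine measure_mono fun u hu => ?_
        have hu' : u ∈ Ioo 0 1 := ⟨hF.1.trans_lt hu.1, hu.2⟩
        refine ⟨lt_max_of_lt_left (show t < quantile P X u from ?_), hu'⟩
        rw [← not_le, quantile_le_iff hX hu' t, not_le]
        exact hu.1
    _ ≤ Q.restrict (Ioo 0 1) {u | t < max (quantile P X u) 0} := Measure.le_restrict_apply _ _

theorem restrict_le_max_neg_quantile_le_measure (hD : IsDistortion D) (hQ : IsCorresponding D Q)
    (hconv : ConvexOn ℝ (Icc 0 1) D) (hX : Measurable X) {t : ℝ} (ht : 0 < t) :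
    Q.restrict (Ioo 0 1) {u | t ≤ max (-quantile P X u) 0} ≤ P {ω | t ≤ max (-X ω) 0} := by
  have hF := distFun_mem_Icc (P := P) hX (-t)
  have hset : {ω | t ≤ max (-X ω) 0} = {ω | X ω ≤ -t} := by
    ext ω
    simp [ht.not_ge, le_neg]
  calc Q.restrict (Ioo 0 1) {u | t ≤ max (-quantile P X u) 0}
      = Q ({u | t ≤ max (-quantile P X u) 0} ∩ Ioo 0 1) := Measure.restrict_apply' measurableSet_Ioo
    _ ≤ Q (Ioc 0 (distFun P X (-t))) := by
        refine measure_mono fun u ⟨hut, hu⟩ => ⟨hu.1, (quantile_le_iff hX hu _).1 ?_⟩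
        have : t ≤ -quantile P X u := (le_max_iff.1 hut).resolve_right ht.not_ge
        linarith
    _ ≤ ENNReal.ofReal (distFun P X (-t)) := hQ.measure_Ioc_zero_le_of_convexOn hD hconv hF
    _ = P {ω | t ≤ max (-X ω) 0} := by rw [hset, ofReal_distFun]

end TailComparison

section LayerCake

variable {α β : Type*} [MeasurableSpace α] [MeasurableSpace β] {μ : Measure α} {ν : Measure β}
  {f : α → ℝ} {g : β → ℝ}

theorem lintegral_ofReal_le_of_meas_lt_le (hf : 0 ≤ᵐ[μ] f) (hfm : AEMeasurable f μ)
    (hg : 0 ≤ᵐ[ν] g) (hgm : AEMeasurable g ν)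
    (h : ∀ t > 0, μ {a | t < f a} ≤ ν {b | t < g b}) :
    ∫⁻ a, ENNReal.ofReal (f a) ∂μ ≤ ∫⁻ b, ENNReal.ofReal (g b) ∂ν := by
  rw [lintegral_eq_lintegral_meas_lt μ hf hfm, lintegral_eq_lintegral_meas_lt ν hg hgm]
  exact setLIntegral_mono' measurableSet_Ioi h

theorem lintegral_ofReal_le_of_meas_le_le (hf : 0 ≤ᵐ[μ] f) (hfm : AEMeasurable f μ)
    (hg : 0 ≤ᵐ[ν] g) (hgm : AEMeasurable g ν)
    (h : ∀ t > 0, μ {a | t ≤ f a} ≤ ν {b | t ≤ g b}) :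
    ∫⁻ a, ENNReal.ofReal (f a) ∂μ ≤ ∫⁻ b, ENNReal.ofReal (g b) ∂ν := by
  rw [lintegral_eq_lintegral_meas_le μ hf hfm, lintegral_eq_lintegral_meas_le ν hg hgm]
  exact setLIntegral_mono' measurableSet_Ioi h

end LayerCake

/-- If `D` is convex, then `𝓛_Q ⊆ {X | E[X⁺] < ∞}` and `E[X] ≤ ϱ_Q[X]` for every `X ∈ 𝓛_Q`,
where `E[X] := E[X⁺] - E[X⁻] ∈ [-∞,∞)`. -/
theorem expectation_le_rho_of_convex {Ω : Type*} [MeasurableSpace Ω]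
    (P : Measure Ω) [IsProbabilityMeasure P] (D : ℝ → ℝ) (Q : Measure ℝ)
    (hD : IsDistortion D) (hQ : IsCorresponding D Q)
    (hconv : ConvexOn ℝ (Set.Icc (0:ℝ) 1) D) :
    ∀ X : Ω → ℝ, Measurable X → memLQ P Q X →
      (∫⁻ ω, ENNReal.ofReal (max (X ω) 0) ∂P) < ⊤ ∧
      ((∫⁻ ω, ENNReal.ofReal (max (X ω) 0) ∂P) : EReal)
          - ((∫⁻ ω, ENNReal.ofReal (max (-(X ω)) 0) ∂P) : EReal)
        ≤ rho P Q X := by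
  intro X hX hmem
  have hq : AEMeasurable (quantile P X) (Q.restrict (Ioo 0 1)) :=
    aemeasurable_restrict_of_monotoneOn measurableSet_Ioo (monotoneOn_quantile hX)
  have hpos : ∫⁻ ω, ENNReal.ofReal (max (X ω) 0) ∂P
      ≤ ∫⁻ u in Ioo 0 1, ENNReal.ofReal (max (quantile P X u) 0) ∂Q :=
    lintegral_ofReal_le_of_meas_lt_le (.of_forall fun _ => le_max_right _ _)
      (hX.max measurable_const).aemeasurable (.of_forall fun _ => le_max_right _ _)
      (hq.max aemeasurable_const)
      fun _ ht => measure_lt_max_le_restrict_quantile hD hQ hconv hX ht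
  have hneg : ∫⁻ u in Ioo 0 1, ENNReal.ofReal (max (-quantile P X u) 0) ∂Q
      ≤ ∫⁻ ω, ENNReal.ofReal (max (-X ω) 0) ∂P :=
    lintegral_ofReal_le_of_meas_le_le (.of_forall fun _ => le_max_right _ _)
      (hq.neg.max aemeasurable_const) (.of_forall fun _ => le_max_right _ _)
      (hX.neg.max measurable_const).aemeasurable
      fun _ ht => restrict_le_max_neg_quantile_le_measure hD hQ hconv hX ht
  exact ⟨hpos.trans_lt hmem, EReal.sub_le_sub (EReal.coe_ennreal_le_coe_ennreal_iff.2 hpos)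
    (EReal.coe_ennreal_le_coe_ennreal_iff.2 hneg)⟩
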